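/- Let G be a group and S a finite generating set with 1 ∉ S satisfying condition (*). Let p denote the number of elements of S of order 2 and q the number of elements of S of order at least 3. Then there exists a generating set T of G with S ⊆ T, 1 ∉ T, |T^±| ≤ p + 6q, such that the triple (G,S,T) is strongly orientation-rigid. Furthermore, every generating set of a group G having no non-trivial abelian characteristic subgroups satisfies condition (*). -/

import Mathlib

open scoped Pointwise

universe u v

/-- The (right) Cayley graph of `G` with respect to `S`: vertices are the elements
of `G`, and `g`, `h` are adjacent iff `g⁻¹ * h ∈ S ∪ S⁻¹`. -/
def cayleyGraph (G : Type u) [Group G] (S : Set G) : SimpleGraph G where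
  Adj g h := g ≠ h ∧ g⁻¹ * h ∈ S ∪ S⁻¹
  symm := ⟨by
    rintro g h ⟨hne, hmem⟩
    refine ⟨hne.symm, ?_⟩
    have h1 : h⁻¹ * g = (g⁻¹ * h)⁻¹ := by group
    rw [h1]
    rcases hmem with hm | hm
    · exact Or.inr (Set.mem_inv.mpr (by simpa using hm))
    · exact Or.inl (Set.mem_inv.mp hm)⟩
  loopless := ⟨fun g hg => hg.1 rfl⟩

/-- A group is generalized dicyclic if it is non-abelian and has an abelian normal
subgroup `A` of index 2 and an element `x` of order 4 not in `A` such that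
`x * a * x⁻¹ = a⁻¹` for every `a ∈ A`. -/
def IsGeneralizedDicyclic (G : Type u) [Group G] : Prop :=
  (¬ ∀ a b : G, a * b = b * a) ∧
    ∃ (A : Subgroup G) (x : G), A.Normal ∧ (∀ a ∈ A, ∀ b ∈ A, a * b = b * a) ∧
      A.index = 2 ∧ orderOf x = 4 ∧ x ∉ A ∧ ∀ a ∈ A, x * a * x⁻¹ = a⁻¹

/-- A group is generalized dihedral if it is a semidirect product `A ⋊ Z/2Z` with `A`
abelian and `Z/2Z` acting by inversion; equivalently it has an abelian subgroup `A` of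
index 2 and an element `x ∉ A` with `x ^ 2 = 1` acting on `A` by inversion. -/
def IsGeneralizedDihedral (G : Type u) [Group G] : Prop :=
  ∃ A : Subgroup G, (∀ a ∈ A, ∀ b ∈ A, a * b = b * a) ∧ A.index = 2 ∧
    ∃ x : G, x ∉ A ∧ x ^ 2 = 1 ∧ ∀ a ∈ A, x * a * x⁻¹ = a⁻¹

section GroupDefs

variable {G : Type u} [Group G]

/-- The vertex set of the ball of radius 1 around `1` in the Cayley graph `Cay(G,S)`. -/
def ball1 (S : Set G) : Set G := insert (1 : G) (S ∪ S⁻¹)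

/-- A map `φ : G → G` is colour-preserving (for the colouring of `Cay(G,S)` by
unoriented labels) if `φ (g * s) ∈ {φ g * s, φ g * s⁻¹}` for all `g ∈ G`, `s ∈ S^±`. -/
def IsColourPreserving (S : Set G) (φ : G → G) : Prop :=
  ∀ g : G, ∀ s ∈ S ∪ S⁻¹, φ (g * s) = φ g * s ∨ φ (g * s) = φ g * s⁻¹

/-- A permutation of the vertices of a graph is an automorphism if it preserves
adjacency. -/
def IsGraphAuto {V : Type v} (Γ : SimpleGraph V) (φ : Equiv.Perm V) : Prop :=
  ∀ x y : V, Γ.Adj (φ x) (φ y) ↔ Γ.Adj x y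

/-- `Cay(G,S)` is a graphical regular representation: its only automorphisms are the
left multiplications by elements of `G`. -/
def IsGRR (S : Set G) : Prop :=
  ∀ φ : Equiv.Perm G, IsGraphAuto (cayleyGraph G S) φ → ∃ a : G, ∀ x : G, φ x = a * x

/-- The directed Cayley graph `Cay⃗(G,S)` is a digraphical regular representation: its
only automorphisms are the left multiplications by elements of `G`. -/
def IsDRR (S : Set G) : Prop :=
  ∀ φ : Equiv.Perm G, (∀ g h : G, (φ g)⁻¹ * φ h ∈ S ↔ g⁻¹ * h ∈ S) →
    ∃ a : G, ∀ x : G, φ x = a * x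

/-- The pair `(G,S)` is orientation-rigid if the group of colour-preserving
automorphisms of `Cay(G,S)` acts freely and transitively on the vertices. -/
def OrientationRigidPair (S : Set G) : Prop :=
  ∀ x y : G, ∃! φ : Equiv.Perm G, IsColourPreserving S ⇑φ ∧ φ x = y

/-- The pair `(G,S)` is colour-rigid if every automorphism of `Cay(G,S)` is
colour-preserving. -/
def ColourRigidPair (S : Set G) : Prop :=
  ∀ φ : Equiv.Perm G, IsGraphAuto (cayleyGraph G S) φ → IsColourPreserving S ⇑φ

/-- A colour-preserving automorphism of the ball of radius 1 around `1` in `Cay(G,T)`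
fixing the vertex `1`. -/
def BallColourAutoFixing (T : Set G) (φ : G → G) : Prop :=
  Set.BijOn φ (ball1 T) (ball1 T) ∧ φ 1 = 1 ∧
    ∀ g ∈ ball1 T, ∀ s ∈ T ∪ T⁻¹, g * s ∈ ball1 T →
      (φ (g * s) = φ g * s ∨ φ (g * s) = φ g * s⁻¹)

/-- An automorphism of the ball of radius 1 around `1` in `Cay(G,T)` (as induced
subgraph) fixing the vertex `1`. -/
def BallAutoFixing (T : Set G) (φ : G → G) : Prop :=
  Set.BijOn φ (ball1 T) (ball1 T) ∧ φ 1 = 1 ∧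
    ∀ g ∈ ball1 T, ∀ h ∈ ball1 T,
      ((cayleyGraph G T).Adj (φ g) (φ h) ↔ (cayleyGraph G T).Adj g h)

/-- `(G,S,T)` is a strongly orientation-rigid triple: every colour-preserving
automorphism of the ball of radius 1 of `Cay(G,T)` fixing `1` fixes the ball of
radius 1 of `Cay(G,S)` pointwise. -/
def StronglyOrientationRigid (S T : Set G) : Prop :=
  ∀ φ : G → G, BallColourAutoFixing T φ → ∀ x ∈ ball1 S, φ x = x

/-- `(G,S,T)` is a strongly colour-rigid triple: every automorphism of the ball of
radius 1 of `Cay(G,T)` fixing `1` acts by colour-preserving automorphisms on the ball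
of radius 1 of `Cay(G,S)`. -/
def StronglyColourRigid (S T : Set G) : Prop :=
  ∀ φ : G → G, BallAutoFixing T φ →
    ∀ g ∈ ball1 S, ∀ s ∈ S ∪ S⁻¹, g * s ∈ ball1 S →
      (φ (g * s) = φ g * s ∨ φ (g * s) = φ g * s⁻¹)

/-- `(G,S,T)` is a strong GRR triple: every automorphism of the ball of radius 1 of
`Cay(G,T)` fixing `1` fixes the ball of radius 1 of `Cay(G,S)` pointwise. -/
def StrongGRRTriple (S T : Set G) : Prop :=
  ∀ φ : G → G, BallAutoFixing T φ → ∀ x ∈ ball1 S, φ x = x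

/-- The number of triangles of `Cay(G,S)` containing the two vertices `1` and `s`. -/
noncomputable def triangleCount (S : Set G) (s : G) : ℕ :=
  Set.ncard {t : G | (cayleyGraph G S).Adj 1 s ∧ (cayleyGraph G S).Adj 1 t ∧
    (cayleyGraph G S).Adj t s}

/-- `S^{≤3}`: the set of non-identity elements of `G` which are products of at most 3
elements of `S^± = S ∪ S⁻¹`. -/
def wordLE3 (S : Set G) : Set G :=
  {g : G | g ≠ 1 ∧ ∃ l : List G, l.length ≤ 3 ∧ (∀ x ∈ l, x ∈ S ∪ S⁻¹) ∧ l.prod = g}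

/-- The group `𝓑(G,T)` of permutations `φ` of `T ∪ {1}` with `φ 1 = 1` and
`φ (s * t) ∈ {φ s * t, φ s * t⁻¹}` whenever `s ∈ T ∪ {1}`, `t ∈ T` and `s * t ∈ T`. -/
def MemBallPermGroup (T : Set G) (φ : G → G) : Prop :=
  Set.BijOn φ (insert (1 : G) T) (insert (1 : G) T) ∧ φ 1 = 1 ∧
    ∀ s ∈ insert (1 : G) T, ∀ t ∈ T, s * t ∈ T →
      (φ (s * t) = φ s * t ∨ φ (s * t) = φ s * t⁻¹)

end GroupDefs

/-- A covering of graphs: for every vertex `x`, the restriction of `f` to the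
neighbours of `x` is a bijection onto the neighbours of `f x`. -/
def IsGraphCovering {V : Type u} {W : Type v} (Γ : SimpleGraph V) (Δ : SimpleGraph W)
    (f : V → W) : Prop :=
  ∀ x : V, Set.BijOn f (Γ.neighborSet x) (Δ.neighborSet (f x))

/-- The restriction of `f` to the ball of radius 1 around `x` is an isomorphism onto
the ball of radius 1 around `f x`. -/
def BallIsoAt {V : Type u} {W : Type v} (Γ : SimpleGraph V) (Δ : SimpleGraph W)
    (f : V → W) (x : V) : Prop :=
  Set.BijOn f (insert x (Γ.neighborSet x)) (insert (f x) (Δ.neighborSet (f x))) ∧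
    ∀ y ∈ insert x (Γ.neighborSet x), ∀ z ∈ insert x (Γ.neighborSet x),
      (Γ.Adj y z ↔ Δ.Adj (f y) (f z))

/-- `ψ` is compatible with the labels of `Cay(G,S)`: two edges of `Cay(G,S)` with the
same image have the same (unoriented) label. -/
def CompatibleWithLabels {G : Type u} [Group G] {W : Type v} (S : Set G) (ψ : G → W) :
    Prop :=
  ∀ g h g' h' : G, (cayleyGraph G S).Adj g h → (cayleyGraph G S).Adj g' h' →
    ψ g = ψ g' → ψ h = ψ h' → (g⁻¹ * h = g'⁻¹ * h' ∨ g⁻¹ * h = h'⁻¹ * g')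

/-- The function `F(n) = 2(2n²+3n−2)²(2n²+4n−1)`. -/
def Ffun (n : ℕ) : ℕ := 2 * (2 * n ^ 2 + 3 * n - 2) ^ 2 * (2 * n ^ 2 + 4 * n - 1)

/-- The function `F̌(n) = 4(2n²+3n−2)²·n·(n+2)`. -/
def Fcheckfun (n : ℕ) : ℕ := 4 * (2 * n ^ 2 + 3 * n - 2) ^ 2 * n * (n + 2)

/-- A Tarski monster of exponent `p`: an infinite group all of whose non-trivial proper
subgroups are cyclic of order `p`. -/
def IsTarskiMonster (G : Type u) [Group G] (p : ℕ) : Prop :=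
  Infinite G ∧ ∀ H : Subgroup G, H ≠ ⊥ → H ≠ ⊤ → IsCyclic H ∧ Nat.card H = p


/-!
For a generator `s` with `s² ≠ 1`, condition (*) gives `g` with `s² ≠ g²` that `s` neither
centralises nor inverts. Adding `g` and `g⁻¹ s` to `S` puts the edge `g — s` with label `g⁻¹ s`
into the ball around `1`. A colour-preserving automorphism `φ` of the ball fixing `1` sends each
neighbour `t` to `t` or `t⁻¹`, and each of the four ways of sending `s` to `s⁻¹` compatibly with
that edge contradicts one of `s² ≠ 1`, `s² ≠ g²`, `sgs⁻¹ ≠ g`, `sgs⁻¹ ≠ g⁻¹`. Involutions are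
fixed anyway, and `φ s⁻¹ = s⁻¹` follows from `φ s = s` by injectivity. Each `s` of order at
least 3 contributes at most the six elements `s^{±1}, g^{±1}, (g⁻¹ s)^{±1}` to `T^±`.

If (*) fails for `s`, every `g` satisfies `g² = s²` or is centralised or inverted by `s`, and in
each case `g` commutes with `s²`. So `s²` lies in the centre, an abelian characteristic subgroup.
-/

section StarCondition

variable {G : Type*} [Group G]

def IsStarWitness (s g : G) : Prop :=
  s ^ 2 ≠ g ^ 2 ∧ s * g * s⁻¹ ≠ g ∧ s * g * s⁻¹ ≠ g⁻¹

lemma eq_of_mul_inv_eq_conj {a b c d : G} (w : G) (hab : a = b)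
    (h : c * d⁻¹ = w * (a * b⁻¹) * w⁻¹) : c = d := by
  rwa [← mul_inv_eq_one, h, conj_eq_one_iff, mul_inv_eq_one]

namespace IsStarWitness

variable {s g : G}

lemma ne_one (h : IsStarWitness s g) : g ≠ 1 := by
  rintro rfl
  exact h.2.1 (by group)

lemma inv_mul_ne_one (h : IsStarWitness s g) : g⁻¹ * s ≠ 1 := by
  intro hgs
  obtain rfl : g = s := (inv_mul_eq_one.mp hgs)
  exact h.2.1 (by group)

lemma inv_ne_mul (hs : s ^ 2 ≠ 1) (h : IsStarWitness s g) {a : G} (ha : a = g ∨ a = g⁻¹) :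
    s⁻¹ ≠ a * (g⁻¹ * s) ∧ s⁻¹ ≠ a * (g⁻¹ * s)⁻¹ := by
  obtain ⟨hsq, hcomm, hinv⟩ := h
  rcases ha with ha | ha <;> subst a <;> refine ⟨fun e => ?_, fun e => ?_⟩
  · exact hs (eq_of_mul_inv_eq_conj 1 e.symm (by rw [sq]; group))
  · exact hinv (eq_of_mul_inv_eq_conj s e.symm (by group))
  · exact hsq (eq_of_mul_inv_eq_conj (g ^ 2) e (by rw [sq, sq]; group)).symm
  · exact hcomm (eq_of_mul_inv_eq_conj (s * g) e (by group))

end IsStarWitness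

lemma sq_mem_center_of_forall_not_isStarWitness {s : G} (h : ∀ g, ¬ IsStarWitness s g) :
    s ^ 2 ∈ Subgroup.center G := by
  refine Subgroup.mem_center_iff.mpr fun g => ?_
  by_cases hsq : s ^ 2 = g ^ 2
  · rw [hsq]
    exact (pow_mul_comm' g 2).symm
  by_cases hcomm : s * g * s⁻¹ = g
  · exact ((Commute.pow_left (mul_inv_eq_iff_eq_mul.mp hcomm) 2).eq).symm
  have hinv : s * g * s⁻¹ = g⁻¹ := by
    by_contra hinv
    exact h g ⟨hsq, hcomm, hinv⟩
  have hinv' : s * g⁻¹ * s⁻¹ = g := by simpa [mul_assoc] using congrArg (·⁻¹) hinv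
  calc g * s ^ 2 = s * g⁻¹ * s⁻¹ * s ^ 2 := by rw [hinv']
    _ = s * g⁻¹ * s := by group
    _ = s * (s * g * s⁻¹) * s := by rw [hinv]
    _ = s ^ 2 * g := by rw [sq]; group

lemma sq_eq_one_or_exists_isStarWitness (hZ : Subgroup.center G = ⊥) (s : G) :
    s ^ 2 = 1 ∨ ∃ g, IsStarWitness s g := by
  by_contra! h
  exact h.1 (Subgroup.mem_bot.mp (hZ ▸ sq_mem_center_of_forall_not_isStarWitness h.2))

end StarCondition

lemma mem_ball1_of_mem {G : Type*} [Group G] {T : Set G} {t : G} (ht : t ∈ T ∪ T⁻¹) :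
    t ∈ ball1 T :=
  Or.inr ht

namespace BallColourAutoFixing

variable {G : Type*} [Group G] {T : Set G} {φ : G → G}

lemma apply_eq_or_eq_inv (hφ : BallColourAutoFixing T φ) {t : G} (ht : t ∈ T ∪ T⁻¹) :
    φ t = t ∨ φ t = t⁻¹ := by
  simpa [hφ.2.1] using hφ.2.2 1 (Set.mem_insert 1 _) t ht (by simpa using mem_ball1_of_mem ht)

lemma apply_eq_self_of_sq_eq_one (hφ : BallColourAutoFixing T φ) {t : G}
    (ht : t ∈ T ∪ T⁻¹) (h2 : t ^ 2 = 1) : φ t = t := by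
  rcases hφ.apply_eq_or_eq_inv ht with h | h
  · exact h
  · rwa [inv_eq_of_mul_eq_one_right (sq t ▸ h2)] at h

lemma apply_inv_eq_inv (hφ : BallColourAutoFixing T φ) {t : G} (ht : t ∈ T ∪ T⁻¹)
    (hfix : φ t = t) : φ t⁻¹ = t⁻¹ := by
  have ht' : t⁻¹ ∈ T ∪ T⁻¹ := by simpa [or_comm] using ht
  rcases hφ.apply_eq_or_eq_inv ht' with h | h
  · exact h
  · rw [inv_inv] at h
    have hself : t⁻¹ = t :=
      hφ.1.injOn (mem_ball1_of_mem ht') (mem_ball1_of_mem ht) (h.trans hfix.symm)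
    rw [h, hself]

lemma apply_eq_self_of_isStarWitness (hφ : BallColourAutoFixing T φ) {s g : G}
    (hs : s ∈ T ∪ T⁻¹) (hg : g ∈ T ∪ T⁻¹) (hgs : g⁻¹ * s ∈ T ∪ T⁻¹) (hs2 : s ^ 2 ≠ 1)
    (hw : IsStarWitness s g) : φ s = s := by
  refine (hφ.apply_eq_or_eq_inv hs).resolve_right fun hinv => ?_
  have hedge :=
    hφ.2.2 g (mem_ball1_of_mem hg) (g⁻¹ * s) hgs (by simpa using mem_ball1_of_mem hs)
  rw [mul_inv_cancel_left, hinv] at hedge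
  obtain ⟨h₁, h₂⟩ := hw.inv_ne_mul hs2 (hφ.apply_eq_or_eq_inv hg)
  exact hedge.elim h₁ h₂

end BallColourAutoFixing

section Counting

open Finset

variable {G : Type*} [Group G]

lemma orderOf_eq_two_iff_sq_eq_one {x : G} (hx : x ≠ 1) : orderOf x = 2 ↔ x ^ 2 = 1 := by
  simp [orderOf_eq_prime_iff, hx]

lemma three_le_orderOf_or_orderOf_eq_zero_iff {x : G} (hx : x ≠ 1) :
    3 ≤ orderOf x ∨ orderOf x = 0 ↔ x ^ 2 ≠ 1 := by
  rw [ne_eq, ← orderOf_eq_two_iff_sq_eq_one hx]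
  have := orderOf_eq_one_iff.not.mpr hx
  omega

lemma ncard_union_inv_le_two_mul (s : Set G) : (s ∪ s⁻¹).ncard ≤ 2 * s.ncard := by
  have := Set.ncard_union_le s s⁻¹
  rw [Set.ncard_inv] at this
  omega

lemma ncard_union_inv_le [DecidableEq G] (S : Finset G) :
    ((S : Set G) ∪ (S : Set G)⁻¹).ncard ≤
      #(S.filter (· ^ 2 = 1)) + 2 * #(S.filter (· ^ 2 ≠ 1)) := by
  set S₂ := S.filter (· ^ 2 = 1)
  set S₃ := S.filter (· ^ 2 ≠ 1)
  have hsub : (S : Set G) ∪ (S : Set G)⁻¹ ⊆ (S₂ : Set G) ∪ ((S₃ : Set G) ∪ (S₃ : Set G)⁻¹) := by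
    rintro x (hx | hx) <;> by_cases h2 : x ^ 2 = 1
    · exact Or.inl (by simp_all [S₂])
    · exact Or.inr (Or.inl (by simp_all [S₃]))
    · rw [Set.mem_inv, inv_eq_of_mul_eq_one_right (sq x ▸ h2)] at hx
      exact Or.inl (by simp_all [S₂])
    · exact Or.inr (Or.inr (by simp_all [S₃]))
  have hfin : ((S₂ : Set G) ∪ ((S₃ : Set G) ∪ (S₃ : Set G)⁻¹)).Finite :=
    S₂.finite_toSet.union (S₃.finite_toSet.union S₃.finite_toSet.inv)
  calc ((S : Set G) ∪ (S : Set G)⁻¹).ncard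
      ≤ ((S₂ : Set G) ∪ ((S₃ : Set G) ∪ (S₃ : Set G)⁻¹)).ncard := Set.ncard_le_ncard hsub hfin
    _ ≤ (S₂ : Set G).ncard + 2 * (S₃ : Set G).ncard :=
      (Set.ncard_union_le _ _).trans (Nat.add_le_add_left (ncard_union_inv_le_two_mul _) _)
    _ = #S₂ + 2 * #S₃ := by rw [Set.ncard_coe_finset, Set.ncard_coe_finset]

end Counting

section StarExtension

open Finset

variable {G : Type*} [Group G] [DecidableEq G]

def starExtension (S : Finset G) (w : G → G) : Finset G :=
  S ∪ (S.filter (· ^ 2 ≠ 1)).image w ∪ (S.filter (· ^ 2 ≠ 1)).image fun s => (w s)⁻¹ * s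

variable {S : Finset G} {w : G → G}

lemma subset_starExtension : S ⊆ starExtension S w :=
  subset_union_left.trans subset_union_left

lemma one_notMem_starExtension (h1S : (1 : G) ∉ S)
    (hw : ∀ s ∈ S, s ^ 2 ≠ 1 → IsStarWitness s (w s)) : (1 : G) ∉ starExtension S w := by
  simp only [starExtension, mem_union, mem_image, mem_filter, not_or, not_exists, not_and]
  exact ⟨⟨h1S, fun s ⟨hs, hs2⟩ => (hw s hs hs2).ne_one⟩,
    fun s ⟨hs, hs2⟩ => (hw s hs hs2).inv_mul_ne_one⟩

lemma ncard_starExtension_le :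
    ((starExtension S w : Set G) ∪ (starExtension S w : Set G)⁻¹).ncard ≤
      #(S.filter (· ^ 2 = 1)) + 6 * #(S.filter (· ^ 2 ≠ 1)) := by
  set A := (S.filter (· ^ 2 ≠ 1)).image w
  set B := (S.filter (· ^ 2 ≠ 1)).image fun s => (w s)⁻¹ * s
  have hsplit : (starExtension S w : Set G) ∪ (starExtension S w : Set G)⁻¹ =
      ((S : Set G) ∪ (S : Set G)⁻¹) ∪ ((A : Set G) ∪ (A : Set G)⁻¹) ∪
        ((B : Set G) ∪ (B : Set G)⁻¹) := by
    simp only [starExtension, coe_union, Set.union_inv]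
    rw [Set.union_union_union_comm, Set.union_union_union_comm (S : Set G)]
  have hA : (A : Set G).ncard ≤ #(S.filter (· ^ 2 ≠ 1)) := by
    rw [Set.ncard_coe_finset]; exact card_image_le
  have hB : (B : Set G).ncard ≤ #(S.filter (· ^ 2 ≠ 1)) := by
    rw [Set.ncard_coe_finset]; exact card_image_le
  rw [hsplit]
  refine (Set.ncard_union_le _ _).trans ?_
  grw [Set.ncard_union_le, ncard_union_inv_le S, ncard_union_inv_le_two_mul (A : Set G),
    ncard_union_inv_le_two_mul (B : Set G), hA, hB]
  omega

theorem stronglyOrientationRigid_starExtension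
    (hw : ∀ s ∈ S, s ^ 2 ≠ 1 → IsStarWitness s (w s)) :
    StronglyOrientationRigid (S : Set G) (starExtension S w : Set G) := by
  intro φ hφ x hx
  have hmem : ∀ t ∈ starExtension S w,
      t ∈ (starExtension S w : Set G) ∪ (starExtension S w : Set G)⁻¹ := fun t ht => Or.inl ht
  have hfix : ∀ s ∈ S, φ s = s := by
    intro s hs
    by_cases hs2 : s ^ 2 = 1
    · exact hφ.apply_eq_self_of_sq_eq_one (hmem s (subset_starExtension hs)) hs2
    · have hsS₃ : s ∈ S.filter (· ^ 2 ≠ 1) := mem_filter.mpr ⟨hs, hs2⟩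
      exact hφ.apply_eq_self_of_isStarWitness (hmem s (subset_starExtension hs))
        (hmem _ (mem_union_left _ (mem_union_right _ (mem_image_of_mem w hsS₃))))
        (hmem _ (mem_union_right _ (mem_image_of_mem _ hsS₃))) hs2 (hw s hs hs2)
  rcases hx with rfl | hx | hx
  · exact hφ.2.1
  · exact hfix x hx
  · simpa using hφ.apply_inv_eq_inv (hmem _ (subset_starExtension hx)) (hfix _ hx)

end StarExtension

/-- **Proposition (condition (*)).** If a finite generating set `S` of `G` satisfies
condition (*), then `S` extends to a generating set `T` with `|T^±| ≤ p + 6q` such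
that `(G,S,T)` is strongly orientation-rigid, where `p` (resp. `q`) is the number of
elements of `S` of order 2 (resp. of order at least 3). Furthermore, every generating
set of a group with no non-trivial abelian characteristic subgroups satisfies (*). -/
theorem property_star_rigidity {G : Type u} [Group G] (S : Finset G)
    (h1S : (1 : G) ∉ S) (hgen : Subgroup.closure (S : Set G) = ⊤)
    (hstar : ∀ s ∈ S, s ^ 2 = 1 ∨
      ∃ g : G, s ^ 2 ≠ g ^ 2 ∧ s * g * s⁻¹ ≠ g ∧ s * g * s⁻¹ ≠ g⁻¹)
    (p q : ℕ)
    (hp : p = (S.filter fun s => orderOf s = 2).card)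
    (hq : q = (S.filter fun s => 3 ≤ orderOf s ∨ orderOf s = 0).card) :
    (∃ T : Finset G, S ⊆ T ∧ (1 : G) ∉ T ∧ Subgroup.closure (T : Set G) = ⊤ ∧
        Set.ncard ((T : Set G) ∪ (T : Set G)⁻¹) ≤ p + 6 * q ∧
        StronglyOrientationRigid (S : Set G) (T : Set G)) ∧
      (∀ (H : Type v) [Group H],
        (∀ K : Subgroup H, K.Characteristic → (∀ a ∈ K, ∀ b ∈ K, a * b = b * a) → K = ⊥) →
        ∀ S' : Set H, Subgroup.closure S' = ⊤ →
          ∀ s ∈ S', s ^ 2 = 1 ∨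
            ∃ g : H, s ^ 2 ≠ g ^ 2 ∧ s * g * s⁻¹ ≠ g ∧ s * g * s⁻¹ ≠ g⁻¹) := by
  classical
  refine ⟨?_, fun H _ hchar _ _ s _ => ?_⟩
  · have hne : ∀ s ∈ S, s ≠ 1 := fun s hs h => h1S (h ▸ hs)
    have hp' : p = (S.filter (· ^ 2 = 1)).card :=
      hp.trans (congrArg Finset.card
        (Finset.filter_congr fun s hs => orderOf_eq_two_iff_sq_eq_one (hne s hs)))
    have hq' : q = (S.filter (· ^ 2 ≠ 1)).card := hq.trans (congrArg Finset.card
      (Finset.filter_congr fun s hs => three_le_orderOf_or_orderOf_eq_zero_iff (hne s hs)))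
    choose! w hw using fun s hs hs2 => (hstar s hs).resolve_left hs2
    refine ⟨starExtension S w, subset_starExtension, one_notMem_starExtension h1S hw, ?_,
      hp' ▸ hq' ▸ ncard_starExtension_le, stronglyOrientationRigid_starExtension hw⟩
    exact top_le_iff.mp (hgen ▸ Subgroup.closure_mono subset_starExtension)
  · have hZ : Subgroup.center H = ⊥ :=
      hchar _ inferInstance fun a ha b _ => (Subgroup.mem_center_iff.mp ha b).symm
    exact sq_eq_one_or_exists_isStarWitness hZ s
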